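/- arXiv:2504.12738 — 5 statements merged into one kernel-verified Lean document; each statement's English description precedes it below -/
import Mathlib

section
/- If a PVM Q = {Q_y} (orthogonal projections summing to the identity) is a classical post-processing of a POVM P = {P_x} via a conditional probability distribution p(y|x), i.e., Q_y = Σ_x p(y|x) P_x for all y, then the post-processing is deterministic: p(y|x) ∈ {0,1} for all x, y (whenever P_x ≠ 0). -/
open Matrix BigOperators Filter
open scoped ComplexOrder Kronecker Classical

abbrev Mat (d : ℕ) := Matrix (Fin d) (Fin d) ℂ

def IsPOVM {X : Type*} [Fintype X] {d : ℕ} (P : X → Mat d) : Prop :=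
  (∀ x, (P x).PosSemidef) ∧ ∑ x, P x = 1

def IsPVM {X : Type*} [Fintype X] {d : ℕ} (P : X → Mat d) : Prop :=
  IsPOVM P ∧ (∀ x, P x * P x = P x) ∧ ∀ x y, x ≠ y → P x * P y = 0

def IsDensity {d : ℕ} (ρ : Mat d) : Prop := ρ.PosSemidef ∧ ρ.trace = 1

/-- `Q ⪯ P`: `Q` is a classical post-processing of `P`. -/
def IsPostProcessingOf {Y X : Type*} [Fintype Y] [Fintype X] {d : ℕ}
    (Q : Y → Mat d) (P : X → Mat d) : Prop :=
  ∃ p : X → Y → ℝ, (∀ x y, 0 ≤ p x y) ∧ (∀ x, ∑ y, p x y = 1) ∧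
    ∀ y, Q y = ∑ x, (p x y : ℂ) • P x

/-!
If `Q = ∑ₓ cₓ Pₓ` is a projection, then `Q (1 - Q) = 0`, so
`0 = tr (Q (1 - Q)) = ∑ₓ cₓ tr (Pₓ (1 - Q))` is a sum of nonnegative terms; hence
`tr (Pₓ (1 - Q)) = 0` whenever `cₓ ≠ 0`. Since `1 - Q = ∑ₓ (1 - cₓ) Pₓ`, symmetrically
`tr (Pₓ Q) = 0` whenever `cₓ ≠ 1`. If both held, `tr Pₓ = 0` and so `Pₓ = 0`.
-/

namespace Matrix

variable {𝕜 n ι : Type*} [RCLike 𝕜] [Fintype ι]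

theorem posSemidef_sum_smul {c : ι → 𝕜} {P : ι → Matrix n n 𝕜} (hc : ∀ i, 0 ≤ c i)
    (hP : ∀ i, (P i).PosSemidef) : (∑ i, c i • P i).PosSemidef :=
  posSemidef_sum _ fun i _ ↦ (hP i).smul (hc i)

variable [Fintype n]

open scoped MatrixOrder in
theorem PosSemidef.trace_mul_nonneg {A B : Matrix n n 𝕜} (hA : A.PosSemidef)
    (hB : B.PosSemidef) : 0 ≤ (A * B).trace := by
  obtain ⟨C, rfl⟩ := CStarAlgebra.nonneg_iff_eq_star_mul_self.mp hA.nonneg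
  rw [star_eq_conjTranspose, Matrix.mul_assoc, trace_mul_comm]
  exact (hB.mul_mul_conjTranspose_same C).trace_nonneg

theorem trace_mul_eq_zero_of_trace_sum_smul_mul_eq_zero {c : ι → 𝕜} {P : ι → Matrix n n 𝕜}
    {B : Matrix n n 𝕜} (hc : ∀ i, 0 ≤ c i) (hP : ∀ i, (P i).PosSemidef) (hB : B.PosSemidef)
    (h : ((∑ i, c i • P i) * B).trace = 0) {i : ι} (hi : c i ≠ 0) : (P i * B).trace = 0 := by
  simp only [Finset.sum_mul, trace_sum, smul_mul_assoc, trace_smul, smul_eq_mul] at h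
  have hterm := (Finset.sum_eq_zero_iff_of_nonneg fun j _ ↦
    mul_nonneg (hc j) ((hP j).trace_mul_nonneg hB)).mp h i (Finset.mem_univ i)
  exact (mul_eq_zero.mp hterm).resolve_left hi

variable [DecidableEq n]

theorem coeff_eq_zero_or_one_of_isIdempotentElem_sum_smul {c : ι → 𝕜} {P : ι → Matrix n n 𝕜}
    (hP : ∀ i, (P i).PosSemidef) (hP1 : ∑ i, P i = 1) (hc0 : ∀ i, 0 ≤ c i) (hc1 : ∀ i, c i ≤ 1)
    (hQ : IsIdempotentElem (∑ i, c i • P i)) {i : ι} (hi : P i ≠ 0) : c i = 0 ∨ c i = 1 := by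
  set Q := ∑ i, c i • P i
  by_contra! ⟨h0, h1⟩
  have hcompl : 1 - Q = ∑ j, (1 - c j) • P j := by
    simp only [Q, ← hP1, sub_smul, one_smul, Finset.sum_sub_distrib]
  have hcompl_nonneg : ∀ j, 0 ≤ 1 - c j := fun j ↦ sub_nonneg.mpr (hc1 j)
  have hPQc : (P i * (1 - Q)).trace = 0 :=
    trace_mul_eq_zero_of_trace_sum_smul_mul_eq_zero hc0 hP
      (hcompl ▸ posSemidef_sum_smul hcompl_nonneg hP)
      (by rw [mul_sub, mul_one, hQ.eq, sub_self, trace_zero]) h0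
  have hPQ : (P i * Q).trace = 0 :=
    trace_mul_eq_zero_of_trace_sum_smul_mul_eq_zero hcompl_nonneg hP (posSemidef_sum_smul hc0 hP)
      (by rw [← hcompl, sub_mul, one_mul, hQ.eq, sub_self, trace_zero])
      (sub_ne_zero.mpr h1.symm)
  refine hi ((hP i).trace_eq_zero_iff.mp ?_)
  rw [← mul_one (P i), ← add_sub_cancel Q 1, mul_add, trace_add, hPQ, hPQc, add_zero]

end Matrix

/-- if a PVM `Q` is a classical post-processing of a POVM `P` via a
conditional probability `p`, the post-processing is deterministic wherever `P x ≠ 0`. -/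
theorem pvm_post_processing_deterministic {X Y : Type*} [Fintype X] [Fintype Y] {d : ℕ}
    (P : X → Mat d) (Q : Y → Mat d) (p : X → Y → ℝ)
    (hP : IsPOVM P) (hQ : IsPVM Q)
    (hp0 : ∀ x y, 0 ≤ p x y) (hp1 : ∀ x, ∑ y, p x y = 1)
    (hpost : ∀ y, Q y = ∑ x, (p x y : ℂ) • P x) :
    ∀ x y, P x ≠ 0 → p x y = 0 ∨ p x y = 1 := by
  intro x y hx
  obtain ⟨hPpsd, hPsum⟩ := hP
  obtain ⟨-, hQidem, -⟩ := hQ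
  have hle : ∀ x', p x' y ≤ 1 := fun x' ↦
    hp1 x' ▸ Finset.single_le_sum (fun y' _ ↦ hp0 x' y') (Finset.mem_univ y)
  have hQy : IsIdempotentElem (∑ x, (p x y : ℂ) • P x) := hpost y ▸ hQidem y
  exact_mod_cast coeff_eq_zero_or_one_of_isIdempotentElem_sum_smul hPpsd hPsum
    (fun x' ↦ by exact_mod_cast hp0 x' y) (fun x' ↦ by exact_mod_cast hle x') hQy hx
end

section
/- Let P = {P_x} be a POVM, γ a state, and {X_y}_{y∈Y} a partition of X_+ = {x : P_x ≠ 0}. Define Q_y = Σ_{x∈X_y} P_x. Then {Q_y} is a PVM all of whose elements commute with γ if and only if the partition is γ-disconnected, i.e., for all y ≠ y', x ∈ X_y, x' ∈ X_{y'}: P_x P_{x'} = 0 and P_x γ P_{x'} = 0. -/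
/-! If the grouping `Q_y = ∑_{x ∈ X_y} P_x` is a projection-valued measure, each effect `P_x` with
`x ∈ X_y` satisfies `0 ≤ P_x ≤ Q_y`, and an effect dominated by a projection is absorbed by it:
`P_x Q_y = P_x = Q_y P_x`. Hence `P_x γ P_x' = P_x Q_y γ Q_y' P_x' = P_x γ Q_y Q_y' P_x' = 0`.
Conversely, disconnectedness makes the `Q_y` pairwise orthogonal, and since they sum to `1` they
are idempotent; expanding `Q_y γ · 1` and `1 · γ Q_y` along `∑ Q = 1`, both equal `Q_y γ Q_y`. -/

open Matrix BigOperators Filter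
open scoped ComplexOrder Kronecker Classical

open Function in
lemma sum_sum_eq_sum_of_biUnion_eq_support {X Y M : Type*} [Fintype X] [Fintype Y]
    [DecidableEq X] [AddCommMonoid M] (f : X → M) [DecidablePred fun x => f x ≠ 0]
    (Xp : Y → Finset X)
    (hdisj : Pairwise (Disjoint on Xp))
    (hcover : Finset.univ.biUnion Xp = Finset.univ.filter (fun x => f x ≠ 0)) :
    ∑ y, ∑ x ∈ Xp y, f x = ∑ x, f x := by
  rw [← Finset.sum_biUnion (hdisj.set_pairwise _), hcover, Finset.sum_filter_ne_zero]

lemma sum_mul_mul_sum_eq_zero {ι κ R : Type*} [NonUnitalNonAssocSemiring R] {s : Finset ι}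
    {t : Finset κ} {f : ι → R} {g : κ → R} {c : R}
    (h : ∀ i ∈ s, ∀ j ∈ t, f i * c * g j = 0) : (∑ i ∈ s, f i) * c * ∑ j ∈ t, g j = 0 := by
  rw [Finset.sum_mul, Finset.sum_mul_sum]
  exact Finset.sum_eq_zero fun i hi => Finset.sum_eq_zero fun j hj => h i hi j hj

lemma mul_mul_eq_zero_of_mul_eq_self {R : Type*} [Semiring R] {a b c e f : R}
    (hae : a * e = a) (hfb : f * b = b) (hef : e * f = 0) (hec : Commute e c) :
    a * c * b = 0 :=
  calc a * c * b = a * e * c * (f * b) := by rw [hae, hfb, mul_assoc]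
    _ = a * c * (e * f) * b := by rw [mul_assoc a, hec.eq]; noncomm_ring
    _ = 0 := by rw [hef, mul_zero, zero_mul]

lemma commute_of_sum_eq_one_of_mul_mul_eq_zero {I R : Type*} [Fintype I] [Semiring R]
    {e : I → R} {c : R} (hsum : ∑ i, e i = 1) (h : ∀ i j, i ≠ j → e i * c * e j = 0) (i : I) :
    Commute (e i) c := by
  have left : e i * c = e i * c * e i := by
    conv_lhs => rw [← mul_one (e i * c), ← hsum, Finset.mul_sum]
    exact Finset.sum_eq_single i (fun j _ hj => h i j (Ne.symm hj)) (by simp)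
  have right : c * e i = e i * c * e i := by
    conv_lhs => rw [← one_mul c, ← hsum, Finset.sum_mul, Finset.sum_mul]
    exact Finset.sum_eq_single i (fun j _ hj => h j i hj) (by simp)
  exact left.trans right.symm

open scoped MatrixOrder Matrix.Norms.L2Operator in
lemma Matrix.mul_sum_eq_self_and_sum_mul_eq_self {ι n : Type*} [Fintype n] [DecidableEq n]
    {s : Finset ι} {f : ι → Matrix n n ℂ} (hf : ∀ i ∈ s, (f i).PosSemidef)
    (hproj : IsStarProjection (∑ i ∈ s, f i)) {i : ι} (hi : i ∈ s) :
    f i * ∑ j ∈ s, f j = f i ∧ (∑ j ∈ s, f j) * f i = f i :=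
  hproj.mul_right_and_mul_left_of_nonneg_of_le (nonneg_iff_posSemidef.mpr (hf i hi))
    (Finset.single_le_sum (fun j hj => nonneg_iff_posSemidef.mpr (hf j hj)) hi)

lemma isPVM_iff_completeOrthogonalIdempotents {Y : Type*} [Fintype Y] {d : ℕ} {Q : Y → Mat d}
    (hQ : ∀ y, (Q y).PosSemidef) : IsPVM Q ↔ CompleteOrthogonalIdempotents Q := by
  simp only [IsPVM, IsPOVM, completeOrthogonalIdempotents_iff, orthogonalIdempotents_iff,
    IsIdempotentElem, Pairwise]
  tauto

theorem grouping_pvm_commuting_iff_disconnected_general {X Y : Type*} [Fintype X] [Fintype Y]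
    [DecidableEq X] {d : ℕ} (P : X → Mat d) (γ : Mat d)
    (hP : IsPOVM P)
    (Xp : Y → Finset X)
    (hdisj : ∀ y y', y ≠ y' → Disjoint (Xp y) (Xp y'))
    (hcover : Finset.univ.biUnion Xp = Finset.univ.filter (fun x => P x ≠ 0)) :
    (IsPVM (fun y => ∑ x ∈ Xp y, P x) ∧
      ∀ y, (∑ x ∈ Xp y, P x) * γ = γ * (∑ x ∈ Xp y, P x)) ↔
    (∀ y y', y ≠ y' → ∀ x ∈ Xp y, ∀ x' ∈ Xp y', P x * P x' = 0 ∧ P x * γ * P x' = 0) := by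
  have hQpsd : ∀ y, (∑ x ∈ Xp y, P x).PosSemidef := fun y =>
    Matrix.posSemidef_sum _ fun x _ => hP.1 x
  have hsum : ∑ y, ∑ x ∈ Xp y, P x = 1 :=
    (sum_sum_eq_sum_of_biUnion_eq_support P Xp hdisj hcover).trans hP.2
  rw [isPVM_iff_completeOrthogonalIdempotents hQpsd]
  constructor
  · rintro ⟨hQ, hcomm⟩ y y' hne x hx x' hx'
    have absorb {y : Y} {x : X} (hx : x ∈ Xp y) :=
      Matrix.mul_sum_eq_self_and_sum_mul_eq_self (fun x _ => hP.1 x)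
        ⟨hQ.idem y, (hQpsd y).isHermitian⟩ hx
    have hcross {c : Mat d} (hc : Commute (∑ x ∈ Xp y, P x) c) : P x * c * P x' = 0 :=
      mul_mul_eq_zero_of_mul_eq_self (absorb hx).1 (absorb hx').2 (hQ.ortho hne) hc
    exact ⟨by simpa using hcross (Commute.one_right _), hcross (hcomm y)⟩
  · intro h
    have hortho : Pairwise fun y y' => (∑ x ∈ Xp y, P x) * ∑ x ∈ Xp y', P x = 0 := by
      intro y y' hne
      rw [← mul_one (∑ x ∈ Xp y, P x)]
      exact sum_mul_mul_sum_eq_zero fun x hx x' hx' => by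
        rw [mul_one]; exact (h y y' hne x hx x' hx').1
    exact ⟨CompleteOrthogonalIdempotents.iff_ortho_complete.mpr ⟨hortho, hsum⟩,
      commute_of_sum_eq_one_of_mul_mul_eq_zero hsum fun y y' hne =>
        sum_mul_mul_sum_eq_zero fun x hx x' hx' => (h y y' hne x hx x' hx').2⟩

/-- the grouping `Q_y = ∑_{x ∈ X_y} P_x` along a partition of `X₊`
is a PVM all of whose elements commute with `γ` iff the partition is
γ-disconnected. -/
theorem grouping_pvm_commuting_iff_disconnected {X Y : Type*} [Fintype X] [Fintype Y]
    [DecidableEq X] {d : ℕ} (P : X → Mat d) (γ : Mat d)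
    (hP : IsPOVM P) (hγ : IsDensity γ)
    (Xp : Y → Finset X)
    (hdisj : ∀ y y', y ≠ y' → Disjoint (Xp y) (Xp y'))
    (hcover : Finset.univ.biUnion Xp = Finset.univ.filter (fun x => P x ≠ 0)) :
    (IsPVM (fun y => ∑ x ∈ Xp y, P x) ∧
      ∀ y, (∑ x ∈ Xp y, P x) * γ = γ * (∑ x ∈ Xp y, P x)) ↔
    (∀ y y', y ≠ y' → ∀ x ∈ Xp y, ∀ x' ∈ Xp y', P x * P x' = 0 ∧ P x * γ * P x' = 0) :=
  grouping_pvm_commuting_iff_disconnected_general P γ hP Xp hdisj hcover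
end

section
/- The irreducible γ-disconnected partition of X_+ is unique up to relabeling of the blocks: any two irreducible γ-disconnected partitions of X_+ are equal as set partitions. -/
open Matrix BigOperators Filter
open scoped ComplexOrder Kronecker Classical

/-- The support of the POVM: `X₊ = {x : P x ≠ 0}`. -/
noncomputable def Xplus {X : Type*} [Fintype X] {d : ℕ} (P : X → Mat d) : Finset X :=
  Finset.univ.filter (fun x => P x ≠ 0)

/-- A partition of `X₊` is γ-disconnected if elements of distinct blocks are
mutually orthogonal and γ-orthogonal. -/
def GammaDisconnected {X : Type*} [Fintype X] [DecidableEq X] {d : ℕ}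
    (P : X → Mat d) (γ : Mat d) (Prt : Finpartition (Xplus P)) : Prop :=
  ∀ s ∈ Prt.parts, ∀ t ∈ Prt.parts, s ≠ t →
    ∀ x ∈ s, ∀ x' ∈ t, P x * P x' = 0 ∧ P x * γ * P x' = 0

/-- `A` is finer than `B` (refines `B`): every block of `A` lies in a block of `B`. -/
def FinerThan {α : Type*} [DecidableEq α] {a : Finset α} (A B : Finpartition a) : Prop :=
  ∀ s ∈ A.parts, ∃ t ∈ B.parts, s ⊆ t

/-- A γ-disconnected partition is irreducible if every strict refinement of it
fails to be γ-disconnected. -/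
def IrreducibleDisconnected {X : Type*} [Fintype X] [DecidableEq X] {d : ℕ}
    (P : X → Mat d) (γ : Mat d) (Prt : Finpartition (Xplus P)) : Prop :=
  GammaDisconnected P γ Prt ∧
    ∀ Qrt : Finpartition (Xplus P), FinerThan Qrt Prt → Qrt ≠ Prt → ¬ GammaDisconnected P γ Qrt

/-- the irreducible γ-disconnected partition of `X₊` is unique. -/
theorem irreducible_gamma_disconnected_partition_unique {X : Type*} [Fintype X] [DecidableEq X]
    {d : ℕ} (P : X → Mat d) (γ : Mat d) (hP : IsPOVM P) (hγ : IsDensity γ)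
    (Prt Qrt : Finpartition (Xplus P))
    (hPrt : IrreducibleDisconnected P γ Prt) (hQrt : IrreducibleDisconnected P γ Qrt) :
    Prt = Qrt := by
  set M := Prt ⊓ Qrt with hM
  have hdisc : GammaDisconnected P γ M := by
    intro s hs t ht hst x hx x' hx'
    rw [Finpartition.parts_inf] at hs ht
    obtain ⟨⟨s₁, s₂⟩, hs12, rfl⟩ := Finset.mem_image.1 (Finset.mem_of_mem_erase hs)
    obtain ⟨⟨t₁, t₂⟩, ht12, rfl⟩ := Finset.mem_image.1 (Finset.mem_of_mem_erase ht)
    rw [Finset.mem_product] at hs12 ht12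
    simp only [Finset.inf_eq_inter, Finset.mem_inter] at hx hx'
    rcases eq_or_ne s₁ t₁ with h1 | h1
    · rcases eq_or_ne s₂ t₂ with h2 | h2
      · exact absurd (by rw [h1, h2]) hst
      · exact hQrt.1 s₂ hs12.2 t₂ ht12.2 h2 x hx.2 x' hx'.2
    · exact hPrt.1 s₁ hs12.1 t₁ ht12.1 h1 x hx.1 x' hx'.1
  have hMP : M = Prt := by
    by_contra h
    exact hPrt.2 M (fun s hs => inf_le_left (a := Prt) (b := Qrt) hs) h hdisc
  have hMQ : M = Qrt := by
    by_contra h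
    exact hQrt.2 M (fun s hs => inf_le_right (a := Prt) (b := Qrt) hs) h hdisc
  rw [← hMP, hMQ]
end

section
/- Let Π = {Π_y} be a γ-disconnected grouping PVM built from a γ-disconnected partition {X_z} of X_+ via Π_z = Σ_{x∈X_z} P_x. Then Π is the maximal γ-commuting projective post-processing of P if and only if the partition {X_z} is irreducible. -/
open Matrix BigOperators Filter
open scoped ComplexOrder Kronecker Classical

/-- `Pv` is a maximal γ-commuting projective post-processing (MPPP) of `P`:
a PVM, a classical post-processing of `P`, commuting with `γ`, and maximal
among all such PVMs with respect to classical post-processing. -/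
def IsMPPP {Y X : Type*} [Fintype Y] [Fintype X] {d : ℕ}
    (Pv : Y → Mat d) (P : X → Mat d) (γ : Mat d) : Prop :=
  IsPVM Pv ∧ (∀ y, Pv y * γ = γ * Pv y) ∧ IsPostProcessingOf Pv P ∧
    ∀ (Y' : Type) [Fintype Y'] (Pv' : Y' → Mat d),
      IsPVM Pv' → (∀ y, Pv' y * γ = γ * Pv' y) → IsPostProcessingOf Pv' P →
        IsPostProcessingOf Pv' Pv

/-!
A γ-commuting PVM `E` that post-processes `P` is itself a grouping of `P`: each `E y` is a
projection and a convex combination of the effects `P x`, which forces `P x * E y ∈ {P x, 0}`, so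
every `x` carries a label `f x` with `E y = ∑_{f x = y} P x`. Effects with different labels are
orthogonal and γ-orthogonal, so cutting the blocks `X_z` along the labels gives a γ-disconnected
refinement. Irreducibility makes this refinement trivial, i.e. the labels are constant on blocks,
and that is exactly `E ⪯ Π`.

Conversely, a strictly finer γ-disconnected partition splits some block `X_z` into two blocks
`t₁ ≠ t₂`. If its grouping were a post-processing of `Π`, both `Π_{t₁}` and `Π_{t₂}` would be
multiples of `Π_z`; since they are orthogonal and `Π_z` is a nonzero projection, one of them
would vanish.
-/

open Finset

theorem mul_eq_of_sum_eq_one {ι R : Type*} [Fintype ι] [NonAssocSemiring R] {e : ι → R}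
    (he : ∑ j, e j = 1) {a : R} {i : ι} (h : ∀ j ≠ i, a * e j = 0) : a * e i = a :=
  calc a * e i = ∑ j, a * e j := (sum_eq_single i (fun j _ hj => h j hj) (by simp)).symm
    _ = a := by rw [← mul_sum, he, mul_one]

theorem eq_mul_of_sum_eq_one {ι R : Type*} [Fintype ι] [NonAssocSemiring R] {e : ι → R}
    (he : ∑ j, e j = 1) {a : R} {i : ι} (h : ∀ j ≠ i, e j * a = 0) : e i * a = a :=
  calc e i * a = ∑ j, e j * a := (sum_eq_single i (fun j _ hj => h j hj) (by simp)).symm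
    _ = a := by rw [← sum_mul, he, one_mul]

namespace Matrix

variable {ι n m 𝕜 : Type*} [Fintype n] [Fintype m] [RCLike 𝕜]

theorem PosSemidef.mul_eq_zero_of_sum_mul_eq_zero {s : Finset ι} {A : ι → Matrix n n 𝕜}
    (hA : ∀ i ∈ s, (A i).PosSemidef) {M : Matrix n m 𝕜} (h : (∑ i ∈ s, A i) * M = 0)
    {i : ι} (hi : i ∈ s) : A i * M = 0 := by
  rw [ext_iff_mulVec]
  intro v
  have hsum : ∑ j ∈ s, star (M *ᵥ v) ⬝ᵥ A j *ᵥ (M *ᵥ v) = 0 := by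
    rw [← dotProduct_sum, ← sum_mulVec, mulVec_mulVec, h, zero_mulVec,
      dotProduct_zero]
  have hi0 := (sum_eq_zero_iff_of_nonneg fun j hj => (hA j hj).dotProduct_mulVec_nonneg _).1
    hsum i hi
  rw [← mulVec_mulVec, zero_mulVec, ← (hA i hi).dotProduct_mulVec_zero_iff, hi0]

variable [Fintype ι] [DecidableEq n]

/-- `E (1 - E) = 0` is a sum of PSD terms `c i • P i * (1 - E)`, and `(1 - E) E = 0` a sum of PSD
terms `(1 - c i) • P i * E`; so `P i * E = P i` when `c i = 1` and `P i * E = 0` otherwise. -/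
theorem mul_eq_self_or_mul_eq_zero_of_eq_sum_smul {P : ι → Matrix n n 𝕜}
    (hP : ∀ i, (P i).PosSemidef) (hP1 : ∑ i, P i = 1) {E : Matrix n n 𝕜} (hE : E * E = E)
    {c : ι → ℝ} (hc0 : ∀ i, 0 ≤ c i) (hc1 : ∀ i, c i ≤ 1) (hEc : E = ∑ i, (c i : 𝕜) • P i)
    (i : ι) : P i * E = P i ∨ P i * E = 0 := by
  have weighted : ∀ w : ι → ℝ, (∀ j, 0 ≤ w j) → w i ≠ 0 → ∀ M : Matrix n n 𝕜,
      (∑ j, (w j : 𝕜) • P j) * M = 0 → P i * M = 0 := by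
    intro w hw hwi M hM
    have := PosSemidef.mul_eq_zero_of_sum_mul_eq_zero
      (fun j _ => (hP j).smul (RCLike.ofReal_nonneg.2 (hw j))) hM (mem_univ i)
    rwa [smul_mul_assoc, smul_eq_zero, or_iff_right (RCLike.ofReal_ne_zero.2 hwi)] at this
  by_cases hci : c i = 1
  · left
    have := weighted c hc0 (by rw [hci]; exact one_ne_zero) (1 - E)
      (by rw [← hEc, mul_sub, mul_one, hE, sub_self])
    rwa [mul_sub, mul_one, sub_eq_zero, eq_comm] at this
  · right
    refine weighted (fun j => 1 - c j) (fun j => sub_nonneg.2 (hc1 j))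
      (sub_ne_zero.2 (Ne.symm hci)) E ?_
    simp only [RCLike.ofReal_sub, RCLike.ofReal_one, sub_smul, one_smul, sum_sub_distrib, hP1,
      ← hEc, sub_mul, one_mul, hE, sub_self]

end Matrix

namespace Finpartition

variable {α : Type*} [DecidableEq α] {s : Finset α}

theorem exists_ne_subset_of_lt {A B : Finpartition s} (h : A < B) :
    ∃ u ∈ B.parts, ∃ t₁ ∈ A.parts, ∃ t₂ ∈ A.parts, t₁ ≠ t₂ ∧ t₁ ⊆ u ∧ t₂ ⊆ u := by
  by_contra! hcon
  have part_subset : ∀ u ∈ B.parts, ∀ z ∈ u, A.part z ⊆ u := by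
    intro u hu z hz
    have hzs : z ∈ s := B.le hu hz
    obtain ⟨u', hu', hzu'⟩ := h.le (A.part_mem.2 hzs)
    rwa [B.eq_of_mem_parts hu' hu (hzu' (A.mem_part hzs)) hz] at hzu'
  refine h.not_ge fun u hu => ?_
  obtain ⟨a, ha⟩ := B.nonempty_of_mem_parts hu
  refine ⟨A.part a, A.part_mem.2 (B.le hu ha), fun z hz => ?_⟩
  have hzs : z ∈ s := B.le hu hz
  by_contra hza
  exact hcon u hu _ (A.part_mem.2 hzs) _ (A.part_mem.2 (B.le hu ha))
    (fun heq => hza (heq ▸ A.mem_part hzs)) (part_subset u hu z hz) (part_subset u hu a ha)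

theorem eq_iff_rel_of_mem_ofSetSetoid {r : Setoid α} [DecidableRel r.r] {u v : Finset α}
    (hu : u ∈ (ofSetSetoid r s).parts) (hv : v ∈ (ofSetSetoid r s).parts) {a b : α}
    (ha : a ∈ u) (hb : b ∈ v) : u = v ↔ r a b := by
  have has := (ofSetSetoid r s).le hu ha
  have hbs := (ofSetSetoid r s).le hv hb
  rw [← (ofSetSetoid r s).part_eq_of_mem hu ha, ← (ofSetSetoid r s).part_eq_of_mem hv hb,
    eq_comm, ← (ofSetSetoid r s).mem_part_iff_part_eq_part hbs has, mem_part_ofSetSetoid_iff_rel]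
  simp [has, hbs]

end Finpartition

theorem finerThan_iff_le {α : Type*} [DecidableEq α] {a : Finset α} {A B : Finpartition a} :
    FinerThan A B ↔ A ≤ B :=
  Iff.rfl

section Measurements

variable {X Y : Type*} [Fintype X] [Fintype Y] {d : ℕ} {P : X → Mat d}

theorem Xplus_nonempty (hP : IsPOVM P) {γ : Mat d} (hγ : IsDensity γ) : (Xplus P).Nonempty := by
  by_contra hempty
  have h1 : (1 : Mat d) = 0 := by
    rw [← hP.2]
    exact sum_eq_zero fun x _ => by_contra fun hx =>
      hempty ⟨x, mem_filter.2 ⟨mem_univ x, hx⟩⟩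
  have hγ0 : γ = 0 := by rw [← mul_one γ, h1, mul_zero]
  simpa [hγ0] using hγ.2

theorem isPostProcessingOf_of_eq_sum_ite {Q : Y → Mat d} (g : X → Y)
    (hQ : ∀ y, Q y = ∑ x, if g x = y then P x else 0) : IsPostProcessingOf Q P := by
  refine ⟨fun x y => if g x = y then 1 else 0, fun x y => by positivity, fun x => by simp,
    fun y => ?_⟩
  rw [hQ]
  exact sum_congr rfl fun x _ => by by_cases hx : g x = y <;> simp [hx]

theorem IsPVM.comp_equiv {Z : Type*} [Fintype Z] {E : Y → Mat d} (hE : IsPVM E) (e : Z ≃ Y) :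
    IsPVM (E ∘ e) :=
  ⟨⟨fun z => hE.1.1 (e z), (e.sum_comp E).trans hE.1.2⟩, fun z => hE.2.1 (e z),
    fun _ _ hzz' => hE.2.2 _ _ (e.injective.ne hzz')⟩

theorem IsPostProcessingOf.comp_equiv {Z : Type*} [Fintype Z] {E : Y → Mat d}
    (hE : IsPostProcessingOf E P) (e : Z ≃ Y) : IsPostProcessingOf (E ∘ e) P := by
  obtain ⟨p, hp0, hp1, hp⟩ := hE
  exact ⟨fun x z => p x (e z), fun x z => hp0 x (e z),
    fun x => (e.sum_comp (p x)).trans (hp1 x), fun z => hp (e z)⟩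

/-- The maximality clause of `IsMPPP` only quantifies over `Y' : Type`; reindexing by `Fin n`
extends it to index types in every universe. -/
theorem IsMPPP.isPostProcessingOf {γ : Mat d} {E : Y → Mat d} (h : IsMPPP E P γ) {Z : Type*}
    [Fintype Z] {F : Z → Mat d} (hF : IsPVM F) (hFγ : ∀ z, F z * γ = γ * F z)
    (hFP : IsPostProcessingOf F P) : IsPostProcessingOf F E := by
  let e := (Fintype.equivFin Z).symm
  obtain ⟨q, hq0, hq1, hq⟩ := h.2.2.2 _ (F ∘ e) (hF.comp_equiv e) (fun i => hFγ (e i))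
    (hFP.comp_equiv e)
  refine ⟨fun y z => q y (e.symm z), fun y z => hq0 y _,
    fun y => (e.symm.sum_comp (q y)).trans (hq1 y), fun z => ?_⟩
  simpa using hq (e.symm z)

theorem IsPVM.mul_eq_smul_of_eq_sum_smul {R : X → Mat d} (hR : IsPVM R) {Z : Type*}
    {E : Z → Mat d} {p : X → Z → ℝ} (hE : ∀ z, E z = ∑ x, (p x z : ℂ) • R x) (z : Z) (x : X) :
    E z * R x = (p x z : ℂ) • R x := by
  rw [hE, sum_mul, sum_eq_single x (fun x' _ hx' => by rw [smul_mul_assoc, hR.2.2 x' x hx',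
    smul_zero]) (by simp), smul_mul_assoc, hR.2.1]

theorem IsPVM.exists_mul_eq_ite (hP : IsPOVM P) {E : Y → Mat d} (hE : IsPVM E)
    (hEP : IsPostProcessingOf E P) :
    ∃ f : X → Y, ∀ x y, P x * E y = if f x = y then P x else 0 := by
  obtain ⟨p, hp0, hp1, hp⟩ := hEP
  have hdich : ∀ x y, P x * E y = P x ∨ P x * E y = 0 := fun x y =>
    Matrix.mul_eq_self_or_mul_eq_zero_of_eq_sum_smul hP.1 hP.2 (hE.2.1 y) (fun x => hp0 x y)
      (fun x => (single_le_sum (fun y _ => hp0 x y) (mem_univ y)).trans_eq (hp1 x)) (hp y) x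
  have hlabel : ∀ x, ∃ y₀, ∀ y, P x * E y = if y₀ = y then P x else 0 := by
    intro x
    by_cases hfix : ∃ y₀, P x * E y₀ = P x
    · obtain ⟨y₀, hy₀⟩ := hfix
      refine ⟨y₀, fun y => ?_⟩
      split_ifs with hy
      · rw [← hy, hy₀]
      · rw [← hy₀, mul_assoc, hE.2.2 y₀ y hy, mul_zero]
    · simp only [not_exists] at hfix
      have hx0 : P x = 0 := by
        rw [← mul_one (P x), ← hE.1.2, mul_sum]
        exact sum_eq_zero fun y _ => (hdich x y).resolve_left (hfix y)
      have hp1x : ∑ y, p x y ≠ 0 := by rw [hp1 x]; exact one_ne_zero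
      obtain ⟨y₀, -⟩ := exists_ne_zero_of_sum_ne_zero hp1x
      exact ⟨y₀, fun y => by simp [hx0]⟩
  choose f hf using hlabel
  exact ⟨f, hf⟩

theorem mul_eq_zero_of_ne_of_mul_eq_ite (hP : IsPOVM P) {γ : Mat d} {E : Y → Mat d}
    (hE : IsPVM E) (hEγ : ∀ y, E y * γ = γ * E y) {f : X → Y}
    (hf : ∀ x y, P x * E y = if f x = y then P x else 0) {x x' : X} (hxx' : f x ≠ f x') :
    P x * P x' = 0 ∧ P x * γ * P x' = 0 := by
  have hx : P x * E (f x) = P x := by simp [hf]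
  have hx' : E (f x') * P x' = P x' := by
    simpa [Matrix.conjTranspose_mul, (hE.1.1 _).1.eq, (hP.1 x').1.eq] using
      congrArg Matrix.conjTranspose (hf x' (f x'))
  have horth := hE.2.2 _ _ hxx'
  constructor
  · calc P x * P x' = P x * (E (f x) * E (f x')) * P x' := by
          rw [← mul_assoc, hx, mul_assoc, hx']
      _ = 0 := by rw [horth, mul_zero, zero_mul]
  · calc P x * γ * P x' = P x * E (f x) * γ * (E (f x') * P x') := by rw [hx, hx']
      _ = P x * γ * (E (f x) * E (f x')) * P x' := by
          simp only [mul_assoc]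
          rw [← mul_assoc (E (f x)) γ, hEγ, mul_assoc]
      _ = 0 := by rw [horth, mul_zero, zero_mul]

end Measurements

section Grouping

variable {X : Type*} [Fintype X] [DecidableEq X] {d : ℕ} {P : X → Mat d} {γ : Mat d}
  {Prt : Finpartition (Xplus P)}

def grouping (P : X → Mat d) (Q : Finpartition (Xplus P)) (s : {t // t ∈ Q.parts}) : Mat d :=
  ∑ x ∈ s.1, P x

theorem GammaDisconnected.inf {A B : Finpartition (Xplus P)} (hA : GammaDisconnected P γ A)
    (hB : GammaDisconnected P γ B) : GammaDisconnected P γ (A ⊓ B) := by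
  intro u hu u' hu' huu' x hx x' hx'
  simp only [Finpartition.parts_inf, mem_erase, mem_image, mem_product] at hu hu'
  obtain ⟨-, ⟨a, b⟩, ⟨ha, hb⟩, rfl⟩ := hu
  obtain ⟨-, ⟨a', b'⟩, ⟨ha', hb'⟩, rfl⟩ := hu'
  simp only [inf_eq_inter, mem_inter] at hx hx'
  by_cases haa' : a = a'
  · subst haa'
    exact hB b hb b' hb' (fun h => huu' (by rw [h])) x hx.2 x' hx'.2
  · exact hA a ha a' ha' haa' x hx.1 x' hx'.1

theorem gammaDisconnected_ofSetSetoid_ker {Y : Type*} (f : X → Y)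
    (hf : ∀ x x', f x ≠ f x' → P x * P x' = 0 ∧ P x * γ * P x' = 0) :
    GammaDisconnected P γ (Finpartition.ofSetSetoid (Setoid.ker f) (Xplus P)) :=
  fun _ hu _ hu' huu' x hx x' hx' => hf x x' fun h =>
    huu' ((Finpartition.eq_iff_rel_of_mem_ofSetSetoid hu hu' hx hx').2 (Setoid.ker_def.2 h))

theorem IrreducibleDisconnected.apply_eq_of_mem_parts (hirr : IrreducibleDisconnected P γ Prt)
    {Y : Type*} (f : X → Y) (hf : ∀ x x', f x ≠ f x' → P x * P x' = 0 ∧ P x * γ * P x' = 0)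
    {s : Finset X} (hs : s ∈ Prt.parts) {x x' : X} (hx : x ∈ s) (hx' : x' ∈ s) : f x = f x' := by
  set F := Finpartition.ofSetSetoid (Setoid.ker f) (Xplus P)
  have hinf : Prt ⊓ F = Prt := by
    by_contra hne
    exact hirr.2 _ (finerThan_iff_le.2 inf_le_left) hne
      (hirr.1.inf (gammaDisconnected_ofSetSetoid_ker f hf))
  have hle : Prt ≤ F := inf_eq_left.1 hinf
  obtain ⟨u, hu, hsu⟩ := hle hs
  exact Setoid.ker_def.1
    ((Finpartition.eq_iff_rel_of_mem_ofSetSetoid hu hu (hsu hx) (hsu hx')).1 rfl)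

theorem sum_grouping (hP : IsPOVM P) (Q : Finpartition (Xplus P)) :
    ∑ s, grouping P Q s = 1 := by
  unfold grouping
  rw [sum_coe_sort Q.parts (fun t => ∑ x ∈ t, P x)]
  refine (sum_biUnion Q.disjoint).symm.trans ?_
  rw [Q.biUnion_parts, ← hP.2]
  exact sum_subset (subset_univ _) fun x _ hx => by simpa [Xplus] using hx

theorem grouping_ne_zero (hP : IsPOVM P) {Q : Finpartition (Xplus P)} (s : {t // t ∈ Q.parts}) :
    grouping P Q s ≠ 0 := by
  obtain ⟨x, hx⟩ := Q.nonempty_of_mem_parts s.2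
  intro h0
  have := Matrix.PosSemidef.mul_eq_zero_of_sum_mul_eq_zero (fun x _ => hP.1 x) (M := 1)
    (by rw [← grouping, h0, zero_mul]) hx
  rw [mul_one] at this
  exact (mem_filter.1 (Q.le s.2 hx)).2 this

theorem GammaDisconnected.sum_mul_sum_eq_zero {Q : Finpartition (Xplus P)}
    (h : GammaDisconnected P γ Q) {s s' : Finset X} (hs : s ∈ Q.parts) (hs' : s' ∈ Q.parts)
    (hss' : s ≠ s') {t t' : Finset X} (ht : t ⊆ s) (ht' : t' ⊆ s') :
    (∑ x ∈ t, P x) * (∑ x ∈ t', P x) = 0 ∧ (∑ x ∈ t, P x) * γ * (∑ x ∈ t', P x) = 0 := by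
  constructor
  · rw [sum_mul_sum]
    exact sum_eq_zero fun x hx => sum_eq_zero fun x' hx' =>
      (h s hs s' hs' hss' x (ht hx) x' (ht' hx')).1
  · rw [sum_mul, sum_mul_sum]
    exact sum_eq_zero fun x hx => sum_eq_zero fun x' hx' =>
      (h s hs s' hs' hss' x (ht hx) x' (ht' hx')).2

theorem GammaDisconnected.grouping_mul_grouping {Q : Finpartition (Xplus P)}
    (h : GammaDisconnected P γ Q) {s s' : {t // t ∈ Q.parts}} (hss' : s ≠ s') :
    grouping P Q s * grouping P Q s' = 0 ∧ grouping P Q s * γ * grouping P Q s' = 0 :=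
  h.sum_mul_sum_eq_zero s.2 s'.2 (Subtype.coe_injective.ne hss') subset_rfl subset_rfl

theorem GammaDisconnected.isPVM_grouping (hP : IsPOVM P) {Q : Finpartition (Xplus P)}
    (h : GammaDisconnected P γ Q) : IsPVM (grouping P Q) :=
  ⟨⟨fun _ => Matrix.posSemidef_sum _ fun x _ => hP.1 x, sum_grouping hP Q⟩,
    fun _ => mul_eq_of_sum_eq_one (sum_grouping hP Q) fun _ hs' =>
      (h.grouping_mul_grouping hs'.symm).1,
    fun _ _ hss' => (h.grouping_mul_grouping hss').1⟩

/-- Both sides equal `Π_s γ Π_s`. -/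
theorem GammaDisconnected.grouping_mul_comm (hP : IsPOVM P) {Q : Finpartition (Xplus P)}
    (h : GammaDisconnected P γ Q) (s : {t // t ∈ Q.parts}) :
    grouping P Q s * γ = γ * grouping P Q s := by
  rw [← mul_eq_of_sum_eq_one (sum_grouping hP Q) fun _ hs' =>
      (h.grouping_mul_grouping hs'.symm).2,
    mul_assoc, eq_mul_of_sum_eq_one (sum_grouping hP Q) fun _ hs' => by
      rw [← mul_assoc]; exact (h.grouping_mul_grouping hs').2]

/-- Effects outside `X₊` vanish, so they may be sent to an arbitrary block. -/
theorem isPostProcessingOf_grouping (hP : IsPOVM P) (hγ : IsDensity γ)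
    (Q : Finpartition (Xplus P)) : IsPostProcessingOf (grouping P Q) P := by
  obtain ⟨s₀, hs₀⟩ := Q.parts_nonempty (Xplus_nonempty hP hγ).ne_empty
  refine isPostProcessingOf_of_eq_sum_ite
    (fun x => if hx : x ∈ Xplus P then ⟨Q.part x, Q.part_mem.2 hx⟩ else ⟨s₀, hs₀⟩) fun s => ?_
  rw [grouping, ← univ_inter s.1, ← sum_ite_mem]
  refine sum_congr rfl fun x _ => ?_
  by_cases hx : x ∈ Xplus P
  · simp only [dif_pos hx, Subtype.ext_iff, Q.part_eq_iff_mem s.2]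
  · have hx0 : P x = 0 := by simpa [Xplus] using hx
    simp [hx0]

theorem IrreducibleDisconnected.isPostProcessingOf_grouping_of_isPVM (hP : IsPOVM P)
    (hirr : IrreducibleDisconnected P γ Prt) {Y : Type*} [Fintype Y] {E : Y → Mat d}
    (hE : IsPVM E) (hEγ : ∀ y, E y * γ = γ * E y) (hEP : IsPostProcessingOf E P) :
    IsPostProcessingOf E (grouping P Prt) := by
  obtain ⟨f, hf⟩ := hE.exists_mul_eq_ite hP hEP
  have hconst : ∀ s : {t // t ∈ Prt.parts}, ∃ y, ∀ x ∈ s.1, f x = y := fun s => by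
    obtain ⟨a, ha⟩ := Prt.nonempty_of_mem_parts s.2
    exact ⟨f a, fun x hx => hirr.apply_eq_of_mem_parts f
      (fun _ _ => mul_eq_zero_of_ne_of_mul_eq_ite hP hE hEγ hf) s.2 hx ha⟩
  choose g hg using hconst
  refine isPostProcessingOf_of_eq_sum_ite g fun y => ?_
  rw [← one_mul (E y), ← sum_grouping hP Prt, sum_mul]
  refine sum_congr rfl fun s _ => ?_
  rw [grouping, sum_mul, sum_congr rfl fun x hx => by rw [hf, hg s x hx]]
  by_cases hs : g s = y <;> simp [hs]

theorem IrreducibleDisconnected.isMPPP_grouping (hP : IsPOVM P) (hγ : IsDensity γ)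
    (hirr : IrreducibleDisconnected P γ Prt) : IsMPPP (grouping P Prt) P γ :=
  ⟨hirr.1.isPVM_grouping hP, hirr.1.grouping_mul_comm hP, isPostProcessingOf_grouping hP hγ Prt,
    fun _ _ _ hE hEγ hEP => hirr.isPostProcessingOf_grouping_of_isPVM hP hE hEγ hEP⟩

theorem IsMPPP.irreducibleDisconnected (hP : IsPOVM P) (hγ : IsDensity γ)
    (hdisc : GammaDisconnected P γ Prt) (h : IsMPPP (grouping P Prt) P γ) :
    IrreducibleDisconnected P γ Prt := by
  refine ⟨hdisc, fun Q hQP hne hQ => ?_⟩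
  obtain ⟨s, hs, t₁, ht₁, t₂, ht₂, h12, ht₁s, ht₂s⟩ :=
    Finpartition.exists_ne_subset_of_lt (lt_of_le_of_ne (finerThan_iff_le.1 hQP) hne)
  obtain ⟨q, -, -, hq⟩ := h.isPostProcessingOf (hQ.isPVM_grouping hP) (hQ.grouping_mul_comm hP)
    (isPostProcessingOf_grouping hP hγ Q)
  have hgroup := hdisc.isPVM_grouping hP
  have hblock : ∀ t (ht : t ∈ Q.parts), t ⊆ s →
      grouping P Q ⟨t, ht⟩ = (q ⟨s, hs⟩ ⟨t, ht⟩ : ℂ) • grouping P Prt ⟨s, hs⟩ := by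
    intro t ht hts
    rw [← hgroup.mul_eq_smul_of_eq_sum_smul hq]
    exact (mul_eq_of_sum_eq_one (sum_grouping hP Prt) fun s' hs' =>
      (hdisc.sum_mul_sum_eq_zero hs s'.2 (Subtype.coe_injective.ne hs'.symm) hts
        subset_rfl).1).symm
  have hprod := (hQ.grouping_mul_grouping (s := ⟨t₁, ht₁⟩) (s' := ⟨t₂, ht₂⟩)
    fun h => h12 (Subtype.ext_iff.1 h)).1
  rw [hblock t₁ ht₁ ht₁s, hblock t₂ ht₂ ht₂s, smul_mul_smul_comm, hgroup.2.1, smul_eq_zero,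
    mul_eq_zero] at hprod
  rcases hprod with (hq0 | hq0) | hs0
  · exact grouping_ne_zero hP ⟨t₁, ht₁⟩ (by rw [hblock t₁ ht₁ ht₁s, hq0, zero_smul])
  · exact grouping_ne_zero hP ⟨t₂, ht₂⟩ (by rw [hblock t₂ ht₂ ht₂s, hq0, zero_smul])
  · exact grouping_ne_zero hP _ hs0

end Grouping

/-- the grouping PVM built from a γ-disconnected partition of `X₊`
is the maximal γ-commuting projective post-processing of `P` iff the partition
is irreducible. -/
theorem grouping_is_mppp_iff_irreducible {X : Type*} [Fintype X] [DecidableEq X] {d : ℕ}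
    (P : X → Mat d) (γ : Mat d) (hP : IsPOVM P) (hγ : IsDensity γ)
    (Prt : Finpartition (Xplus P))
    (hdisc : GammaDisconnected P γ Prt) :
    IsMPPP (fun s : {t // t ∈ Prt.parts} => ∑ x ∈ s.1, P x) P γ ↔
      IrreducibleDisconnected P γ Prt :=
  ⟨IsMPPP.irreducibleDisconnected hP hγ hdisc, IrreducibleDisconnected.isMPPP_grouping hP hγ⟩
end

section
/- Let {Π_y}_{y∈Y} be a PVM commuting with the invertible state γ, and Δ(ρ) = Σ_y Tr[Π_y ρ] Π_y γ / Tr[Π_y γ]. Then a state ρ satisfies Δ(ρ) = ρ if and only if there exist nonnegative coefficients c_y with ρ = Σ_y c_y Π_y γ. -/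
open Matrix BigOperators Filter
open scoped ComplexOrder Kronecker Classical

/-- The coarse-graining map `C_{P,γ}(ρ) = ∑_x Tr[P_x ρ] γ^{1/2} P_x γ^{1/2} / Tr[P_x γ]`. -/
noncomputable def coarseMap {X : Type*} [Fintype X] {d : ℕ}
    (P : X → Mat d) {γ : Mat d} (hγ : γ.PosSemidef) : Mat d → Mat d :=
  fun ρ => ∑ x, ((P x * ρ).trace / (P x * γ).trace) • ((hγ.1.eigenvectorUnitary.1 * diagonal (fun i => ((Real.sqrt (hγ.1.eigenvalues i) : ℝ) : ℂ)) *
      (star hγ.1.eigenvectorUnitary : Mat d)) * P x *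
      (hγ.1.eigenvectorUnitary.1 * diagonal (fun i => ((Real.sqrt (hγ.1.eigenvalues i) : ℝ) : ℂ)) *
      (star hγ.1.eigenvectorUnitary : Mat d)))

/-- The resource-destroying map `Δ(ρ) = ∑_y Tr[Π_y ρ] Π_y γ / Tr[Π_y γ]`. -/
noncomputable def deltaMap {Y : Type*} [Fintype Y] {d : ℕ}
    (Pv : Y → Mat d) (γ : Mat d) : Mat d → Mat d :=
  fun ρ => ∑ y, ((Pv y * ρ).trace / (Pv y * γ).trace) • (Pv y * γ)

/-- Apply `Φ` blockwise to a `k × k` block matrix, i.e. `(id_k ⊗ Φ)`. -/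
def blockApply {d : ℕ} (Φ : Mat d → Mat d) (k : ℕ)
    (M : Matrix (Fin k × Fin d) (Fin k × Fin d) ℂ) :
    Matrix (Fin k × Fin d) (Fin k × Fin d) ℂ :=
  Matrix.of fun p q => Φ (Matrix.of fun a b => M (p.1, a) (q.1, b)) p.2 q.2

/-- Complete positivity: `id_k ⊗ Φ` preserves positive semidefiniteness for all `k`. -/
def IsCompletelyPositive {d : ℕ} (Φ : Mat d → Mat d) : Prop :=
  ∀ (k : ℕ) (M : Matrix (Fin k × Fin d) (Fin k × Fin d) ℂ),
    M.PosSemidef → (blockApply Φ k M).PosSemidef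

/-!
Writing `A * B = √A √A √B √B` and cycling the trace gives `Tr[A B] = ‖√A √B‖₂²` for positive
semidefinite `A`, `B`. Hence `Tr[Π_y ρ]` and `Tr[Π_y γ]` are nonnegative, so a fixed point
`ρ = Δ(ρ)` is already a nonnegative combination of the `Π_y γ`. Conversely, `Π_y` picks out the
`y`-th summand of `∑_z c_z Π_z γ`, so `Δ` reproduces each coefficient `c_y`; when
`Tr[Π_y γ] = 0` the junk value `x / 0 = 0` is harmless because then `Π_y γ = 0`.
-/

open scoped MatrixOrder

namespace Matrix.PosSemidef

variable {n 𝕜 : Type*} [Fintype n] [DecidableEq n] [RCLike 𝕜] {A B : Matrix n n 𝕜}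

lemma trace_mul_eq_trace_conjTranspose_mul_self (hA : A.PosSemidef) (hB : B.PosSemidef) :
    (A * B).trace =
      ((CFC.sqrt A * CFC.sqrt B)ᴴ * (CFC.sqrt A * CFC.sqrt B)).trace := by
  have hsA : (CFC.sqrt A)ᴴ = CFC.sqrt A := (CFC.sqrt_nonneg A).posSemidef.1.eq
  have hsB : (CFC.sqrt B)ᴴ = CFC.sqrt B := (CFC.sqrt_nonneg B).posSemidef.1.eq
  calc (A * B).trace = (A * (CFC.sqrt B * CFC.sqrt B)).trace := by
        rw [CFC.sqrt_mul_sqrt_self B hB.nonneg]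
    _ = (CFC.sqrt B * A * CFC.sqrt B).trace := by
        rw [← mul_assoc, trace_mul_cycle]
    _ = (CFC.sqrt B * (CFC.sqrt A * CFC.sqrt A) * CFC.sqrt B).trace := by
        rw [CFC.sqrt_mul_sqrt_self A hA.nonneg]
    _ = ((CFC.sqrt A * CFC.sqrt B)ᴴ * (CFC.sqrt A * CFC.sqrt B)).trace := by
        rw [conjTranspose_mul, hsA, hsB]
        noncomm_ring

lemma trace_mul_nonneg_s13 (hA : A.PosSemidef) (hB : B.PosSemidef) : 0 ≤ (A * B).trace := by
  rw [hA.trace_mul_eq_trace_conjTranspose_mul_self hB]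
  exact (posSemidef_conjTranspose_mul_self _).trace_nonneg

lemma mul_eq_zero_of_trace_mul_eq_zero (hA : A.PosSemidef) (hB : B.PosSemidef)
    (h : (A * B).trace = 0) : A * B = 0 := by
  rw [hA.trace_mul_eq_trace_conjTranspose_mul_self hB,
    trace_conjTranspose_mul_self_eq_zero_iff] at h
  calc A * B = CFC.sqrt A * (CFC.sqrt A * CFC.sqrt B) * CFC.sqrt B := by
        simp only [← mul_assoc, CFC.sqrt_mul_sqrt_self A hA.nonneg]
        rw [mul_assoc, CFC.sqrt_mul_sqrt_self B hB.nonneg]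
    _ = 0 := by rw [h, mul_zero, zero_mul]

end Matrix.PosSemidef

lemma IsPVM.mul_sum_smul_mul {X : Type*} [Fintype X] {d : ℕ} {P : X → Mat d} (hP : IsPVM P)
    (c : X → ℂ) (M : Mat d) (x : X) :
    P x * ∑ z, c z • (P z * M) = c x • (P x * M) := by
  rw [Finset.mul_sum, Finset.sum_eq_single x]
  · rw [mul_smul_comm, ← mul_assoc, hP.2.1 x]
  · intro z _ hzx
    rw [mul_smul_comm, ← mul_assoc, hP.2.2 x z (Ne.symm hzx), zero_mul, smul_zero]
  · intro hx
    exact absurd (Finset.mem_univ x) hx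

lemma deltaMap_sum_smul {Y : Type*} [Fintype Y] {d : ℕ} {Pv : Y → Mat d} {γ : Mat d}
    (hPv : IsPVM Pv) (hγ : γ.PosSemidef) (c : Y → ℂ) :
    deltaMap Pv γ (∑ y, c y • (Pv y * γ)) = ∑ y, c y • (Pv y * γ) := by
  refine Finset.sum_congr rfl fun y _ => ?_
  rw [hPv.mul_sum_smul_mul, trace_smul, smul_eq_mul]
  by_cases hy : (Pv y * γ).trace = 0
  · rw [(hPv.1.1 y).mul_eq_zero_of_trace_mul_eq_zero hγ hy, smul_zero, smul_zero]
  · rw [mul_div_cancel_right₀ _ hy]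

theorem deltaMap_fixed_iff_combination_general {Y : Type*} [Fintype Y] {d : ℕ}
    (Pv : Y → Mat d) (γ : Mat d) (ρ : Mat d)
    (hPv : IsPVM Pv)
    (hγ : γ.PosDef) (hρ : IsDensity ρ) :
    deltaMap Pv γ ρ = ρ ↔
      ∃ c : Y → ℝ, (∀ y, 0 ≤ c y) ∧ ρ = ∑ y, (c y : ℂ) • (Pv y * γ) := by
  constructor
  · intro hfix
    have hratio : ∀ y, 0 ≤ (Pv y * ρ).trace / (Pv y * γ).trace := fun y =>
      div_nonneg ((hPv.1.1 y).trace_mul_nonneg_s13 hρ.1) ((hPv.1.1 y).trace_mul_nonneg_s13 hγ.posSemidef)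
    refine ⟨fun y => ((Pv y * ρ).trace / (Pv y * γ).trace).re,
      fun y => (Complex.nonneg_iff.mp (hratio y)).1, ?_⟩
    conv_lhs => rw [← hfix]
    simp only [deltaMap, ← Complex.eq_re_of_ofReal_le (hratio _)]
  · rintro ⟨c, -, rfl⟩
    exact deltaMap_sum_smul hPv hγ.posSemidef _

/-- a state `ρ` is a fixed point of `Δ` iff `ρ = ∑_y c_y Π_y γ`
with nonnegative coefficients `c_y`. -/
theorem deltaMap_fixed_iff_combination {Y : Type*} [Fintype Y] {d : ℕ}
    (Pv : Y → Mat d) (γ : Mat d) (ρ : Mat d)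
    (hPv : IsPVM Pv) (hcomm : ∀ y, Pv y * γ = γ * Pv y)
    (hγ : γ.PosDef) (hγ1 : γ.trace = 1) (hρ : IsDensity ρ) :
    deltaMap Pv γ ρ = ρ ↔
      ∃ c : Y → ℝ, (∀ y, 0 ≤ c y) ∧ ρ = ∑ y, (c y : ℂ) • (Pv y * γ) :=
  deltaMap_fixed_iff_combination_general Pv γ ρ hPv hγ hρ
end
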